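/- Under a right direct interaction, the effective twist is additively conserved: for all states S', S, S_{2r} ∈ {+1,−1}, twist triples T, T_2 ∈ ℤ³, and crossing sequences X, X_2, the braids B = (S', T, X, S) and B_2 = (S, T_2, X_2, S_{2r}) and their direct-interaction result B'_2 = (S', T + σ_X⁻¹ • T_2, X++X_2, S_{2r}) satisfy Θ(B) + Θ(B_2) = Θ(B'_2). -/
import Mathlib


/-- A crossing generator: one of the four symbols `u`, `d`, `u⁻¹`, `d⁻¹`. -/
inductive CrossGen : Type
  | u : CrossGen
  | d : CrossGen
  | uInv : CrossGen
  | dInv : CrossGen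
deriving DecidableEq

/-- The crossing value: `+1` for `u` and `d`, `-1` for `u⁻¹` and `d⁻¹`. -/
def crossVal : CrossGen → ℤ
  | .u => 1
  | .d => 1
  | .uInv => -1
  | .dInv => -1

/-- The transposition of `{1,2,3}` induced by a crossing generator:
`u, u⁻¹ ↦ (1 2)` and `d, d⁻¹ ↦ (2 3)`. -/
def genPerm : CrossGen → Equiv.Perm (Fin 3)
  | .u => Equiv.swap 0 1
  | .uInv => Equiv.swap 0 1
  | .d => Equiv.swap 1 2
  | .dInv => Equiv.swap 1 2

/-- The permutation induced by a crossing sequence; the head of the list acts first. -/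
def seqPerm : List CrossGen → Equiv.Perm (Fin 3)
  | [] => 1
  | x :: xs => seqPerm xs * genPerm x

/-- The crossing number `c(X)`: the sum of the crossing values of the entries. -/
def crossSum (X : List CrossGen) : ℤ := (X.map crossVal).sum

/-- The action `σ • T` of a permutation of `{1,2,3}` on a twist triple `T ∈ ℤ³`,
permuting the entries. -/
def permAct (σ : Equiv.Perm (Fin 3)) (T : Fin 3 → ℤ) : Fin 3 → ℤ :=
  fun i => T (σ⁻¹ i)

/-- A braid (in unique representation): a quadruple `(S_l, T, X, S_r)` of a left
end-node state, an internal twist triple, a crossing sequence and a right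
end-node state. -/
structure Braid : Type where
  Sl : ℤ
  T : Fin 3 → ℤ
  X : List CrossGen
  Sr : ℤ

/-- The effective twist `Θ(B) = T₁ + T₂ + T₃ − 2 c(X)`. -/
def effTwist (B : Braid) : ℤ := B.T 0 + B.T 1 + B.T 2 - 2 * crossSum B.X

/-- The effective state `χ(B) = (−1)^{|X|} S_l S_r`. -/
def effState (B : Braid) : ℤ := (-1) ^ B.X.length * B.Sl * B.Sr

/-- Under a right direct interaction, the effective twist is additively conserved. -/
theorem effTwist_conserved_right_direct
    (S' S S2r : ℤ) (hS' : S' = 1 ∨ S' = -1) (hS : S = 1 ∨ S = -1)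
    (hS2r : S2r = 1 ∨ S2r = -1)
    (T T2 : Fin 3 → ℤ) (X X2 : List CrossGen) :
    effTwist ⟨S', T, X, S⟩ + effTwist ⟨S, T2, X2, S2r⟩
      = effTwist ⟨S', T + permAct (seqPerm X)⁻¹ T2, X ++ X2, S2r⟩ := by
  have hsum : ∀ σ : Equiv.Perm (Fin 3), T2 (σ 0) + T2 (σ 1) + T2 (σ 2)
      = T2 0 + T2 1 + T2 2 := by
    intro σ
    have := Equiv.sum_comp σ T2
    simpa [Fin.sum_univ_three] using this
  simp only [effTwist, crossSum, List.map_append, List.sum_append, permAct,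
    Pi.add_apply, inv_inv]
  have := hsum (seqPerm X)
  ring_nf
  linarith
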